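/- arXiv:cs/0603053 — 6 statements merged into one kernel-verified Lean document; each statement's English description precedes it below -/
import Mathlib

section
/- The simplified weakest precondition can be strictly weaker than the full weakest precondition: there exist a database B over binary relations P, Q, an update u, and a constraint c such that B satisfies the simplified precondition swp but not wp(u,c), where c is ∀x,y,z ((P(x,y) ∧ Q(y,z)) → (P(x,z) ∨ Q(x,z))), u inserts the single pair (a,a) into P, wp(u,c) is c with P replaced by P ∪ {(a,a)}, and swp is the formula ∀z (¬Q(a,z) ∨ P(a,z) ∨ Q(a,z)) (which is a tautology, hence equals true). -/
/-- The simplified weakest precondition can be strictly weaker than the full one: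
there are a universe `U` with element `a` and relations `P, Q` such that the
simplified precondition `∀z, ¬Q(a,z) ∨ P(a,z) ∨ Q(a,z)` (a tautology) holds while
`wp(u,c)`, i.e. `c` with `P` replaced by `P ∪ {(a,a)}`, fails, where
`c = ∀x,y,z ((P(x,y) ∧ Q(y,z)) → (P(x,z) ∨ Q(x,z)))` and `u` inserts `(a,a)` into `P`. -/
theorem swp_not_imp_wp :
    ∃ (U : Type) (a : U) (P Q : U → U → Prop),
      (∀ z, ¬ Q a z ∨ P a z ∨ Q a z) ∧
      ¬ (∀ x y z, ((P x y ∨ (x = a ∧ y = a)) ∧ Q y z) →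
          ((P x z ∨ (x = a ∧ z = a)) ∨ Q x z)) := by
  refine ⟨Fin 3, 0, fun x y => x = 1 ∧ y = 0, fun x y => x = 0 ∧ y = 2, ?_, ?_⟩
  · intro z
    by_cases h : (0 : Fin 3) = 0 ∧ z = 2
    · exact Or.inr (Or.inr h)
    · exact Or.inl h
  · intro h
    rcases h 1 0 2 ⟨Or.inl ⟨rfl, rfl⟩, rfl, rfl⟩ with (⟨h1, _⟩ | ⟨h1, _⟩) | ⟨h1, _⟩ <;> simp_all
end

section
/- Simplified wp for a constraint with two occurrences of r: let c be ∀x,y,z (¬P(x,y) ∨ ¬P(x,z) ∨ Q(y,z)), and let u insert the single pair (a,b) into P. Then u(B) ⊨ c if and only if B satisfies c ∧ Q(b,b) ∧ ∀z (¬P(a,z) ∨ Q(b,z)) ∧ ∀y (¬P(a,y) ∨ Q(y,b)). In particular, if B ⊨ c, then u(B) ⊨ c iff B satisfies Q(b,b) ∧ ∀z (P(a,z) → Q(b,z)) ∧ ∀y (P(a,y) → Q(y,b)). -/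
/-- Simplified wp for a constraint with two occurrences of `r`:
for `c = ∀x,y,z (¬P(x,y) ∨ ¬P(x,z) ∨ Q(y,z))` and the update inserting `(a,b)`
into `P`, the updated database satisfies `c` iff `B` satisfies
`c ∧ Q(b,b) ∧ ∀z (P(a,z) → Q(b,z)) ∧ ∀y (P(a,y) → Q(y,b))`; in particular,
assuming `c`, the update is safe iff the simplified condition holds. -/
theorem wp_two_occurrences {U : Type*} (a b : U) (P Q : U → U → Prop) :
    ((∀ x y z, (P x y ∨ (x = a ∧ y = b)) → (P x z ∨ (x = a ∧ z = b)) → Q y z) ↔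
      ((∀ x y z, P x y → P x z → Q y z) ∧ Q b b ∧
        (∀ z, P a z → Q b z) ∧ (∀ y, P a y → Q y b))) ∧
    ((∀ x y z, P x y → P x z → Q y z) →
      ((∀ x y z, (P x y ∨ (x = a ∧ y = b)) → (P x z ∨ (x = a ∧ z = b)) → Q y z) ↔
        (Q b b ∧ (∀ z, P a z → Q b z) ∧ (∀ y, P a y → Q y b)))) := by
  constructor
  · constructor
    · intro h
      refine ⟨fun x y z hy hz => h x y z (Or.inl hy) (Or.inl hz),
        h a b b (Or.inr ⟨rfl, rfl⟩) (Or.inr ⟨rfl, rfl⟩),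
        fun z hz => h a b z (Or.inr ⟨rfl, rfl⟩) (Or.inl hz),
        fun y hy => h a y b (Or.inl hy) (Or.inr ⟨rfl, rfl⟩)⟩
    · rintro ⟨hc, hbb, h1, h2⟩ x y z (hy | ⟨rfl, rfl⟩) (hz | ⟨heq, rfl⟩)
      · exact hc x y z hy hz
      · subst heq; exact h2 y hy
      · exact h1 z hz
      · exact hbb
  · intro hc
    constructor
    · intro h
      exact ⟨h a b b (Or.inr ⟨rfl, rfl⟩) (Or.inr ⟨rfl, rfl⟩),
        fun z hz => h a b z (Or.inr ⟨rfl, rfl⟩) (Or.inl hz),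
        fun y hy => h a y b (Or.inl hy) (Or.inr ⟨rfl, rfl⟩)⟩
    · rintro ⟨hbb, h1, h2⟩ x y z (hy | ⟨rfl, rfl⟩) (hz | ⟨heq, rfl⟩)
      · exact hc x y z hy hz
      · subst heq; exact h2 y hy
      · exact h1 z hz
      · exact hbb
end

section
/- Delta-based wp for acyclicity under single-edge insertion: let Arc be a binary relation on U and let Arc' = Arc ∪ {(d,b)}. Define Δ(x,y) to hold iff TC'(x,y) holds via a path using the new edge (d,b), i.e., Δ is the least relation with Δ(d,b); Δ(d,y) whenever TC(b,y); and Δ(x,y) whenever Arc(x,z) ∧ Δ(z,y), where TC, TC' are the transitive closures of Arc, Arc' respectively. If TC is irreflexive (∀x, ¬TC(x,x)), then TC' is irreflexive if and only if Δ is irreflexive (∀x, ¬Δ(x,x)). -/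
/-- The delta relation for the insertion of the single edge `(d, b)` into `Arc`:
the least relation with `Δ(d,b)`, `Δ(d,y)` whenever `TC(b,y)`, and `Δ(x,y)`
whenever `Arc(x,z) ∧ Δ(z,y)`. -/
inductive Delta {U : Type*} (Arc : U → U → Prop) (d b : U) : U → U → Prop where
  | base : Delta Arc d b d b
  | tc {y : U} : Relation.TransGen Arc b y → Delta Arc d b d y
  | step {x z y : U} : Arc x z → Delta Arc d b z y → Delta Arc d b x y

/-!
A path of `Arc ∪ {(d, b)}` either avoids the new edge, and is then a path of `Arc`, or it
splits as `x ⇝ d → b ⇝ y` with both ends `Arc`-paths (cut at the first and at the last use of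
the new edge); the latter paths are exactly those described by `Δ`. So a cycle of the updated
relation is either a cycle of `Arc`, excluded by hypothesis, or a `Δ`-loop.
-/

open Relation

def insertEdge {U : Type*} (r : U → U → Prop) (d b : U) : U → U → Prop :=
  fun x y => r x y ∨ (x = d ∧ y = b)

section

variable {U : Type*} {Arc : U → U → Prop} {d b x y : U}

theorem Delta.iff_reflTransGen :
    Delta Arc d b x y ↔ ReflTransGen Arc x d ∧ ReflTransGen Arc b y := by
  constructor
  · intro hΔ
    induction hΔ with
    | base => exact ⟨.refl, .refl⟩
    | tc hby => exact ⟨.refl, hby.to_reflTransGen⟩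
    | step hxz _ ih => exact ⟨ih.1.head hxz, ih.2⟩
  · rintro ⟨hxd, hby⟩
    induction hxd using ReflTransGen.head_induction_on with
    | refl =>
      rcases reflTransGen_iff_eq_or_transGen.mp hby with rfl | hby
      · exact .base
      · exact .tc hby
    | head hxz _ ih => exact .step hxz ih

theorem transGen_insertEdge_iff :
    TransGen (insertEdge Arc d b) x y ↔
      TransGen Arc x y ∨ (ReflTransGen Arc x d ∧ ReflTransGen Arc b y) := by
  have le_insertEdge : Arc ≤ insertEdge Arc d b := fun _ _ => Or.inl
  constructor
  · intro hxy
    induction hxy with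
    | single hxy =>
      rcases hxy with hxy | ⟨rfl, rfl⟩
      · exact .inl (.single hxy)
      · exact .inr ⟨.refl, .refl⟩
    | tail _ hzy ih =>
      rcases hzy with hzy | ⟨rfl, rfl⟩
      · exact ih.imp (·.tail hzy) fun ⟨hxd, hbz⟩ => ⟨hxd, hbz.tail hzy⟩
      · exact .inr ⟨ih.elim TransGen.to_reflTransGen And.left, .refl⟩
  · rintro (hxy | ⟨hxd, hby⟩)
    · exact TransGen.mono le_insertEdge _ _ hxy
    · exact TransGen.trans_right (ReflTransGen.mono le_insertEdge _ _ hxd)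
        (TransGen.head' (Or.inr ⟨rfl, rfl⟩) (ReflTransGen.mono le_insertEdge _ _ hby))

theorem transGen_insertEdge_iff_or_delta :
    TransGen (insertEdge Arc d b) x y ↔ TransGen Arc x y ∨ Delta Arc d b x y := by
  rw [transGen_insertEdge_iff, Delta.iff_reflTransGen]

end

/-- Delta-based wp for acyclicity under single-edge insertion: if the transitive
closure of `Arc` is irreflexive, then the transitive closure of `Arc ∪ {(d,b)}`
is irreflexive iff `Δ` is irreflexive. -/
theorem acyclicity_delta_wp {U : Type*} (d b : U) (Arc : U → U → Prop)
    (h : ∀ x, ¬ Relation.TransGen Arc x x) :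
    (∀ x, ¬ Relation.TransGen (fun x y => Arc x y ∨ (x = d ∧ y = b)) x x) ↔
      (∀ x, ¬ Delta Arc d b x x) := by
  exact forall_congr' fun x =>
    not_congr (transGen_insertEdge_iff_or_delta.trans (or_iff_right (h x)))
end

section
/- Decomposition of the updated transitive closure: with Arc' = Arc ∪ {(d,b)}, TC = TransGen Arc, TC' = TransGen Arc', and Δ the least relation satisfying Δ(d,b), Δ(d,y) ← TC(b,y), and Δ(x,y) ← Arc(x,z) ∧ Δ(z,y), every pair related by TC' is related by TC or related by a composite path of the form: a (possibly empty) TC-prefix followed by a Δ-witnessed suffix. Formally: TC'(x,y) → TC(x,y) ∨ Δ(x,y) ∨ ∃z, TC(x,z) ∧ Δ(z,y). -/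
/-!
Induct on a path in `Arc ∪ {(d, b)}` from its head. A path avoiding the new edge is an
`Arc`-path; otherwise it is an `Arc`-prefix, the new edge, and a tail starting at `b`.
`Δ` records exactly this shape. Since every `Δ`-witness can be restarted at `d`, a later use
of the new edge is absorbed into the `Δ`-witness of the tail, so the third disjunct is never
needed.
-/

open Relation

namespace Delta

variable {U : Type*} {Arc : U → U → Prop} {d b : U}

theorem restart_at_d {x y : U} (h : Delta Arc d b x y) : Delta Arc d b d y := by
  induction h with
  | base => exact base
  | tc hby => exact tc hby
  | step _ _ ih => exact ih

end Delta

theorem transGen_or_delta_of_transGen_insertEdge {U : Type*} {Arc : U → U → Prop} {d b x y : U}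
    (h : TransGen (fun x y => Arc x y ∨ (x = d ∧ y = b)) x y) :
    TransGen Arc x y ∨ Delta Arc d b x y := by
  induction h using TransGen.head_induction_on with
  | single hxy =>
    rcases hxy with hxy | ⟨rfl, rfl⟩
    · exact .inl (.single hxy)
    · exact .inr .base
  | head hxc _ ih =>
    rcases hxc with hxc | ⟨rfl, rfl⟩
    · exact ih.imp (.head hxc) (.step hxc)
    · exact .inr (ih.elim .tc Delta.restart_at_d)

/-- Decomposition of the updated transitive closure: every pair related by
`TC' = TransGen (Arc ∪ {(d,b)})` is related by `TC = TransGen Arc`, or by `Δ`,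
or by a `TC`-prefix followed by a `Δ`-suffix. -/
theorem transGen_insert_decomposition {U : Type*} (d b : U) (Arc : U → U → Prop) :
    ∀ x y, Relation.TransGen (fun x y => Arc x y ∨ (x = d ∧ y = b)) x y →
      Relation.TransGen Arc x y ∨ Delta Arc d b x y ∨
        ∃ z, Relation.TransGen Arc x z ∧ Delta Arc d b z y :=
  fun _ _ h => (transGen_or_delta_of_transGen_insertEdge h).imp_right .inl
end

section
/- Delta rules for qualified insertion into transitive closure: let Arc, Edge be binary relations on U, let TC = TransGen Arc and Path = TransGen Edge, and consider the update inserting all pairs of Path into TC, so the new relation is TC' := the least relation containing Arc, closed under prepending Arc-edges, and containing Path and closures accordingly — concretely TC' = TransGen (Arc ∪ Path). Define Δ as the least relation with: Δ(x,y) ← Edge(x,y); Δ(x,y) ← Edge(x,z) ∧ TC(z,y); Δ(x,y) ← Edge(x,z) ∧ Δ(z,y); Δ(x,y) ← Arc(x,z) ∧ Δ(z,y). Then TC' = TC ∪ Δ ∪ (TC ∘ Δ), i.e., TC'(x,y) ↔ TC(x,y) ∨ Δ(x,y) ∨ ∃z, TC(x,z) ∧ Δ(z,y). -/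
/-- Delta rules for the qualified insertion of all `Path = TransGen Edge` pairs
into the transitive closure of `Arc`. -/
inductive Delta2 {U : Type*} (Arc Edge : U → U → Prop) : U → U → Prop where
  | e {x y : U} : Edge x y → Delta2 Arc Edge x y
  | etc {x z y : U} : Edge x z → Relation.TransGen Arc z y → Delta2 Arc Edge x y
  | ed {x z y : U} : Edge x z → Delta2 Arc Edge z y → Delta2 Arc Edge x y
  | ad {x z y : U} : Arc x z → Delta2 Arc Edge z y → Delta2 Arc Edge x y

private lemma tc_delta {U : Type*} {Arc Edge : U → U → Prop} {x z y : U}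
    (h : Relation.TransGen Arc x z) (hd : Delta2 Arc Edge z y) : Delta2 Arc Edge x y := by
  induction h using Relation.TransGen.head_induction_on with
  | single h => exact Delta2.ad h hd
  | head h _ ih => exact Delta2.ad h ih

private lemma path_delta {U : Type*} {Arc Edge : U → U → Prop} {x z y : U}
    (h : Relation.TransGen Edge x z) (hd : Delta2 Arc Edge z y) : Delta2 Arc Edge x y := by
  induction h using Relation.TransGen.head_induction_on with
  | single h => exact Delta2.ed h hd
  | head h _ ih => exact Delta2.ed h ih

private lemma path_tc {U : Type*} {Arc Edge : U → U → Prop} {x z y : U}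
    (h : Relation.TransGen Edge x z) (ht : Relation.TransGen Arc z y) : Delta2 Arc Edge x y := by
  induction h using Relation.TransGen.head_induction_on with
  | single h => exact Delta2.etc h ht
  | head h _ ih => exact Delta2.ed h ih

private lemma path_d {U : Type*} {Arc Edge : U → U → Prop} {x y : U}
    (h : Relation.TransGen Edge x y) : Delta2 Arc Edge x y := by
  induction h using Relation.TransGen.head_induction_on with
  | single h => exact Delta2.e h
  | head h _ ih => exact Delta2.ed h ih

private lemma delta_tc' {U : Type*} {Arc Edge : U → U → Prop} {x y : U}
    (h : Delta2 Arc Edge x y) :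
    Relation.TransGen (fun x y => Arc x y ∨ Relation.TransGen Edge x y) x y := by
  induction h with
  | e h => exact Relation.TransGen.single (Or.inr (Relation.TransGen.single h))
  | etc h ht =>
      exact Relation.TransGen.head (Or.inr (Relation.TransGen.single h))
        (Relation.TransGen.mono (fun _ _ => Or.inl) _ _ ht)
  | ed h _ ih => exact Relation.TransGen.head (Or.inr (Relation.TransGen.single h)) ih
  | ad h _ ih => exact Relation.TransGen.head (Or.inl h) ih

/-- `TC' = TC ∪ Δ ∪ (TC ∘ Δ)`, where `TC = TransGen Arc` and
`TC' = TransGen (Arc ∪ TransGen Edge)`. -/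
theorem transGen_qualified_insert_decomposition {U : Type*} (Arc Edge : U → U → Prop) :
    ∀ x y,
      Relation.TransGen (fun x y => Arc x y ∨ Relation.TransGen Edge x y) x y ↔
        (Relation.TransGen Arc x y ∨ Delta2 Arc Edge x y ∨
          ∃ z, Relation.TransGen Arc x z ∧ Delta2 Arc Edge z y) := by
  intro x y
  constructor
  · intro h
    induction h using Relation.TransGen.head_induction_on with
    | single h =>
        rcases h with h | h
        · exact Or.inl (Relation.TransGen.single h)
        · exact Or.inr (Or.inl (path_d h))
    | head h _ ih =>
        rename_i a b _
        rcases h with h | h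
        · rcases ih with ih | ih | ⟨w, hw, hd⟩
          · exact Or.inl (Relation.TransGen.head h ih)
          · exact Or.inr (Or.inl (Delta2.ad h ih))
          · exact Or.inr (Or.inr ⟨w, Relation.TransGen.head h hw, hd⟩)
        · rcases ih with ih | ih | ⟨w, hw, hd⟩
          · exact Or.inr (Or.inl (path_tc h ih))
          · exact Or.inr (Or.inl (path_delta h ih))
          · exact Or.inr (Or.inl (path_delta h (tc_delta hw hd)))
  · rintro (h | h | ⟨z, ht, hd⟩)
    · exact Relation.TransGen.mono (fun _ _ => Or.inl) _ _ h
    · exact delta_tc' h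
    · exact (Relation.TransGen.mono (fun _ _ => Or.inl) _ _ ht).trans (delta_tc' hd)
end

section
/- Corollary: with the setup of the qualified-insertion delta rules, if TC = TransGen Arc is irreflexive, then TransGen (Arc ∪ TransGen Edge) is irreflexive if and only if Δ is irreflexive, where Δ is the least relation closed under: Δ(x,y) ← Edge(x,y); Δ(x,y) ← Edge(x,z) ∧ TC(z,y); Δ(x,y) ← Edge(x,z) ∧ Δ(z,y); Δ(x,y) ← Arc(x,z) ∧ Δ(z,y). That is, the simplified weakest precondition ¬∃x, Δ(x,x) is equivalent, assuming the constraint holds, to the constraint holding after the update. -/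
private lemma delta2_to_union {U : Type*} {Arc Edge : U → U → Prop} {x y : U}
    (hd : Delta2 Arc Edge x y) :
    Relation.TransGen (fun a b => Arc a b ∨ Edge a b) x y := by
  induction hd with
  | e he => exact Relation.TransGen.single (Or.inr he)
  | etc he htc =>
      exact Relation.TransGen.head (Or.inr ‹_›)
        (Relation.TransGen.mono (fun a b hab => Or.inl hab) _ _ htc)
  | ed he _ ih => exact Relation.TransGen.head (Or.inr ‹_›) ih
  | ad ha _ ih => exact Relation.TransGen.head (Or.inl ha) ih

private lemma union_to_tc_or_delta {U : Type*} {Arc Edge : U → U → Prop} {x y : U}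
    (hu : Relation.TransGen (fun a b => Arc a b ∨ Edge a b) x y) :
    Relation.TransGen Arc x y ∨ Delta2 Arc Edge x y := by
  induction hu using Relation.TransGen.head_induction_on with
  | single hab =>
      rcases hab with ha | he
      · exact Or.inl (Relation.TransGen.single ha)
      · exact Or.inr (Delta2.e he)
  | head hab _ ih =>
      rcases hab with ha | he
      · rcases ih with htc | hd
        · exact Or.inl (Relation.TransGen.head ha htc)
        · exact Or.inr (Delta2.ad ha hd)
      · rcases ih with htc | hd
        · exact Or.inr (Delta2.etc he htc)
        · exact Or.inr (Delta2.ed he hd)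

private lemma tc'_iff_union {U : Type*} {Arc Edge : U → U → Prop} {x y : U} :
    Relation.TransGen (fun a b => Arc a b ∨ Relation.TransGen Edge a b) x y ↔
      Relation.TransGen (fun a b => Arc a b ∨ Edge a b) x y := by
  constructor
  · intro h
    induction h with
    | single hab =>
        rcases hab with ha | hp
        · exact Relation.TransGen.single (Or.inl ha)
        · exact Relation.TransGen.mono (fun a b hab => Or.inr hab) _ _ hp
    | tail _ hab ih =>
        rcases hab with ha | hp
        · exact Relation.TransGen.tail ih (Or.inl ha)
        · exact ih.trans (Relation.TransGen.mono (fun a b hab => Or.inr hab) _ _ hp)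
  · exact Relation.TransGen.mono
      (fun a b (hab : Arc a b ∨ Edge a b) => hab.imp id Relation.TransGen.single) _ _

/-- If `TC = TransGen Arc` is irreflexive, then the updated transitive closure
`TC' = TransGen (Arc ∪ TransGen Edge)` is irreflexive iff `Δ` is irreflexive. -/
theorem acyclicity_qualified_delta_wp {U : Type*} (Arc Edge : U → U → Prop)
    (h : ∀ x, ¬ Relation.TransGen Arc x x) :
    (∀ x, ¬ Relation.TransGen (fun x y => Arc x y ∨ Relation.TransGen Edge x y) x x) ↔
      (∀ x, ¬ Delta2 Arc Edge x x) := by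
  constructor
  · intro htc' x hd
    exact htc' x (tc'_iff_union.mpr (delta2_to_union hd))
  · intro hΔ x htc'
    rcases union_to_tc_or_delta (tc'_iff_union.mp htc') with htc | hd
    · exact h x htc
    · exact hΔ x hd
end
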